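/- For odd n ≥ 3, every radio labeling of P_n □ P (path on n vertices times the Petersen graph) has span at least 5n² − n + 6; in particular the lower bound 5n² − n + 5 obtained from the level-sum argument with L₀ the central Petersen-fiber cannot be achieved. -/

import Mathlib

/-!
Write `n = 2m + 1`, let `L₀` be the central Petersen fibre and order the `10n` vertices as
`x₀, …, x_K` by label. With `offset v ∈ [-m, m]` the signed position of `v` relative to `L₀`,
`d(u, v) ≤ |offset u| + |offset v| + 2`, so the radio condition on consecutive vertices gives
`φ xᵢ₊₁ - φ xᵢ ≥ 2m + 1 - |offset xᵢ| - |offset xᵢ₊₁|`. Summing, the span is at least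
`5n² - n + 5 + |offset x₀| + |offset x_K|`. Equality would force `x₀, x_K ∈ L₀` and every step
to be tight: consecutive vertices lie on opposite sides of `L₀` and the gaps are exact. The radio
condition between `x_{k-1}` and `x_{k+1}` then puts a neighbour (in the order) of each of the `20`
vertices at the ends of the path into `L₀`; but the `10` vertices of `L₀`, two of which are `x₀`
and `x_K`, have only `18` neighbouring positions.
-/

open SimpleGraph Finset

/-- The Petersen graph as the Kneser graph K(5,2). -/
def petersen : SimpleGraph {s : Finset (Fin 5) // s.card = 2} where
  Adj a b := Disjoint a.1 b.1
  symm := ⟨fun _ _ h => h.symm⟩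
  loopless := ⟨fun a h => by
    have h0 : a.1 = ⊥ := disjoint_self.mp h
    have h2 := a.2
    rw [h0] at h2
    simp at h2⟩

/-- A radio labeling of `G`: for all distinct `u, v`,
`d(u,v) + |φ(u) - φ(v)| ≥ diam(G) + 1`. -/
def IsRadioLabeling {V : Type*} (G : SimpleGraph V) (φ : V → ℕ) : Prop :=
  ∀ u v : V, u ≠ v → (G.diam : ℤ) + 1 ≤ (G.dist u v : ℤ) + |(φ u : ℤ) - (φ v : ℤ)|

/-- The span of a labeling: the maximum difference between two labels. -/
noncomputable def span {V : Type*} (φ : V → ℕ) : ℕ :=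
  sSup (Set.range fun p : V × V => φ p.1 - φ p.2)

/-- The radio number of `G`: the minimum span over all radio labelings. -/
noncomputable def radioNumber {V : Type*} (G : SimpleGraph V) : ℕ :=
  sInf {s | ∃ φ : V → ℕ, IsRadioLabeling G φ ∧ span φ = s}

/-- `d(v, S)`: the minimum distance from `v` to a vertex of `S`. -/
noncomputable def distToSet {V : Type*} (G : SimpleGraph V) (v : V) (S : Finset V) : ℕ :=
  sInf ((fun w => G.dist v w) '' ↑S)

/-- `diam(S)`: the maximum distance in `G` between two vertices of `S`. -/
noncomputable def setDiam {V : Type*} (G : SimpleGraph V) (S : Finset V) : ℕ :=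
  sSup {d | ∃ x ∈ S, ∃ y ∈ S, G.dist x y = d}

namespace SimpleGraph

variable {α β V : Type*}

theorem dist_boxProd {G : SimpleGraph α} {H : SimpleGraph β} (hG : G.Preconnected)
    (hH : H.Preconnected) (x y : α × β) :
    (G □ H).dist x y = G.dist x.1 y.1 + H.dist x.2 y.2 := by
  rw [dist, dist, dist, edist_boxProd, ENat.toNat_add (edist_ne_top_iff_reachable.2 (hG _ _))
    (edist_ne_top_iff_reachable.2 (hH _ _))]

theorem Walk.abs_sub_le_length {G : SimpleGraph V} (f : V → ℤ)
    (hf : ∀ u v, G.Adj u v → |f u - f v| ≤ 1) {u v : V} (w : G.Walk u v) :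
    |f u - f v| ≤ w.length := by
  induction w with
  | nil => simp
  | @cons u v w hadj _ ih =>
    rw [length_cons]
    push_cast
    linarith [abs_sub_le (f u) (f v) (f w), hf u v hadj]

theorem Reachable.abs_sub_le_dist {G : SimpleGraph V} (f : V → ℤ)
    (hf : ∀ u v, G.Adj u v → |f u - f v| ≤ 1) {u v : V} (h : G.Reachable u v) :
    |f u - f v| ≤ G.dist u v := by
  obtain ⟨w, hw⟩ := h.exists_walk_length_eq_dist
  exact hw ▸ w.abs_sub_le_length f hf

theorem pathGraph_dist_le {n : ℕ} {i j : Fin n} (hij : i ≤ j) :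
    (pathGraph n).dist i j ≤ (j : ℕ) - i := by
  obtain ⟨k, hk⟩ : ∃ k, (j : ℕ) = i + k := ⟨j - i, by omega⟩
  induction k generalizing j with
  | zero => simp [Fin.ext (hk.trans (add_zero _))]
  | succ k ih =>
    let j' : Fin n := ⟨i + k, by omega⟩
    have hadj : (pathGraph n).Adj j' j := pathGraph_adj.2 (.inl (show (i : ℕ) + k + 1 = j by omega))
    calc (pathGraph n).dist i j ≤ (pathGraph n).dist i j' + (pathGraph n).dist j' j :=
          (pathGraph_preconnected n i j').dist_triangle_left j
      _ ≤ ((j' : ℕ) - i) + 1 := by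
          rw [dist_eq_one_iff_adj.2 hadj]
          exact Nat.add_le_add_right (ih (Fin.le_iff_val_le_val.2 (by simp [j'])) rfl) 1
      _ = (j : ℕ) - i := by simp only [add_tsub_cancel_left, j']; omega

theorem pathGraph_dist {n : ℕ} (i j : Fin n) :
    ((pathGraph n).dist i j : ℤ) = |(i : ℤ) - j| := by
  refine le_antisymm ?_ <| (pathGraph_preconnected n i j).abs_sub_le_dist (fun k : Fin n ↦ (k : ℤ))
    fun u v h ↦ abs_le.2 (by rw [pathGraph_adj] at h; omega)
  rcases le_total i j with hij | hij
  · have := pathGraph_dist_le hij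
    rw [abs_sub_comm, abs_of_nonneg (by omega)]
    omega
  · have := pathGraph_dist_le hij
    rw [dist_comm, abs_of_nonneg (by omega)]
    omega

end SimpleGraph

section RadioLabeling

variable {V : Type*} {G : SimpleGraph V} {φ : V → ℕ}

theorem IsRadioLabeling.injective [Finite V] (hG : G.Connected) (hφ : IsRadioLabeling G φ) :
    Function.Injective φ := by
  have := hG.nonempty
  intro u v huv
  by_contra hne
  have hrad := hφ u v hne
  have := dist_le_diam (connected_iff_ediam_ne_top.1 hG) (u := u) (v := v)
  rw [huv, sub_self, abs_zero] at hrad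
  omega

theorem IsRadioLabeling.diam_add_one_le (hφ : IsRadioLabeling G φ) {u v : V} (h : φ u < φ v) :
    (G.diam : ℤ) + 1 ≤ G.dist u v + ((φ v : ℤ) - φ u) := by
  have := hφ u v (fun huv ↦ h.ne (congrArg φ huv))
  rwa [abs_sub_comm, abs_of_pos (by omega)] at this

theorem sub_le_span [Finite V] (φ : V → ℕ) (u v : V) : φ u - φ v ≤ span φ :=
  le_csSup (Set.finite_range _).bddAbove ⟨(u, v), rfl⟩

theorem exists_bijOn_strictMonoOn_comp [Fintype V] [Nonempty V] (hφ : Function.Injective φ) :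
    ∃ x : ℕ → V, Set.BijOn x (Set.Iio (Fintype.card V)) Set.univ ∧
      StrictMonoOn (φ ∘ x) (Set.Iio (Fintype.card V)) := by
  have hfin : (Set.range φ).Finite := Set.finite_range φ
  have hcard : #hfin.toFinset = Fintype.card V := by
    rw [Set.Finite.toFinset_range, card_image_of_injective _ hφ, card_univ]
  set x := Function.invFun φ ∘ Nat.nth (· ∈ Set.range φ)
  have hφx : ∀ k < Fintype.card V, φ (x k) = Nat.nth (· ∈ Set.range φ) k := fun k hk ↦
    Function.invFun_eq (Nat.nth_mem_of_lt_card hfin (hcard ▸ hk))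
  have hmono : StrictMonoOn (φ ∘ x) (Set.Iio (Fintype.card V)) := fun i hi j hj hij ↦ by
    simp only [Function.comp_apply, hφx i hi, hφx j hj]
    exact Nat.nth_strictMonoOn hfin (hcard ▸ hi) (hcard ▸ hj) hij
  refine ⟨x, ⟨Set.mapsTo_univ _ _, hmono.injOn.of_comp, fun v _ ↦ ?_⟩, hmono⟩
  obtain ⟨k, hk, hkv⟩ := Nat.exists_lt_card_finite_nth_eq hfin (Set.mem_range_self v)
  exact ⟨k, hcard ▸ hk, hφ ((hφx k (hcard ▸ hk)).trans hkv)⟩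

end RadioLabeling

section Enumeration

variable {V : Type*} [Fintype V] {x : ℕ → V} {N : ℕ}

theorem sum_range_comp_eq_sum {M : Type*} [AddCommMonoid M]
    (hx : Set.BijOn x (Set.Iio N) Set.univ) (g : V → M) :
    ∑ k ∈ range N, g (x k) = ∑ v, g v :=
  sum_nbij x (fun _ _ ↦ mem_univ _) (by simpa using hx.injOn) (by simpa using hx.surjOn)
    fun _ _ ↦ rfl

theorem card_filter_range_comp (hx : Set.BijOn x (Set.Iio N) Set.univ) (p : V → Prop)
    [DecidablePred p] : #{k ∈ range N | p (x k)} = #{v | p v} := by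
  rw [card_filter, card_filter, sum_range_comp_eq_sum hx fun v ↦ if p v then 1 else 0]

end Enumeration

theorem eq_of_sub_le_of_gap_bounds {f d ℓ : ℕ → ℤ} {K : ℕ} {D c : ℤ}
    (hℓ0 : 0 ≤ ℓ 0) (hℓK : 0 ≤ ℓ K)
    (hgap : ∀ i < K, D - d i ≤ f (i + 1) - f i)
    (hd : ∀ i < K, d i ≤ ℓ i + ℓ (i + 1) + c)
    (hf : f K - f 0 ≤ K * (D - c) - 2 * ∑ i ∈ range (K + 1), ℓ i) :
    ℓ 0 = 0 ∧ ℓ K = 0 ∧ ∀ i < K, d i = ℓ i + ℓ (i + 1) + c ∧ f (i + 1) - f i = D - d i := by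
  set b : ℕ → ℤ := fun i ↦ D - (ℓ i + ℓ (i + 1) + c)
  have hb : ∀ i ∈ range K, b i ≤ f (i + 1) - f i := fun i hi ↦ by
    linarith [hgap i (mem_range.1 hi), hd i (mem_range.1 hi)]
  have hsum_b : ∑ i ∈ range K, b i =
      K * (D - c) - 2 * ∑ i ∈ range (K + 1), ℓ i + ℓ 0 + ℓ K := by
    simp only [b, sum_sub_distrib, sum_add_distrib, sum_const, card_range, nsmul_eq_mul]
    linarith [sum_range_succ ℓ K, sum_range_succ' ℓ K]
  have hsum_le := sum_le_sum hb
  rw [sum_range_sub f K, hsum_b] at hsum_le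
  obtain ⟨h0, hK⟩ : ℓ 0 = 0 ∧ ℓ K = 0 := by constructor <;> linarith
  have hsum_eq := (sum_eq_sum_iff_of_le hb).1 (by rw [sum_range_sub f K, hsum_b]; linarith)
  refine ⟨h0, hK, fun i hi ↦ ?_⟩
  have hbi : b i = f (i + 1) - f i := hsum_eq i (mem_range.2 hi)
  have := hgap i hi
  have := hd i hi
  constructor <;> linarith

theorem card_add_two_le_two_mul_card {T Z : Finset ℕ} {K : ℕ} (h0 : 0 ∈ Z) (hK : K ∈ Z)
    (hT : ∀ k ∈ T, 0 < k ∧ k < K ∧ (k - 1 ∈ Z ∨ k + 1 ∈ Z)) : #T + 2 ≤ 2 * #Z := by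
  have hsub : T ⊆ (Z.erase K).image (· + 1) ∪ (Z.erase 0).image (· - 1) := by
    intro k hk
    obtain ⟨hk0, hkK, hk | hk⟩ := hT k hk
    · exact mem_union_left _ (mem_image.2 ⟨k - 1, mem_erase.2 ⟨by omega, hk⟩, by omega⟩)
    · exact mem_union_right _ (mem_image.2 ⟨k + 1, mem_erase.2 ⟨by omega, hk⟩, by omega⟩)
  have := card_pos.2 ⟨0, h0⟩
  calc #T + 2 ≤ #((Z.erase K).image (· + 1)) + #((Z.erase 0).image (· - 1)) + 2 := by
        gcongr; exact (card_le_card hsub).trans (card_union_le _ _)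
    _ ≤ #(Z.erase K) + #(Z.erase 0) + 2 :=
        Nat.add_le_add_right (Nat.add_le_add card_image_le card_image_le) 2
    _ = 2 * #Z := by rw [card_erase_of_mem hK, card_erase_of_mem h0]; omega

theorem mul_nonpos_of_abs_sub_eq {a b : ℤ} (h : |a - b| = |a| + |b|) : a * b ≤ 0 := by
  rwa [sub_eq_add_neg, ← abs_neg b, abs_add_eq_add_abs_iff, ← mul_nonneg_iff, mul_neg,
    neg_nonneg] at h

theorem eq_zero_or_eq_zero_of_abs_add_abs_le {a b : ℤ} (hab : 0 ≤ a * b)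
    (h : |a| + |b| ≤ |a - b| + 1) : a = 0 ∨ b = 0 := by
  rcases mul_nonneg_iff.1 hab with ⟨ha, hb⟩ | ⟨ha, hb⟩ <;> grind

theorem sum_range_abs_sub (m : ℕ) : ∑ k ∈ range (2 * m + 1), |(k : ℤ) - m| = m * (m + 1) := by
  induction m with
  | zero => simp
  | succ m ih =>
    rw [show 2 * (m + 1) + 1 = 2 * m + 1 + 1 + 1 by ring, sum_range_succ', sum_range_succ]
    push_cast
    simp only [add_sub_add_right_eq_sub, ih]
    rw [abs_of_nonneg (by omega), abs_of_nonpos (by omega)]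
    ring

abbrev PetersenVertex := {s : Finset (Fin 5) // s.card = 2}

instance : Nonempty PetersenVertex := ⟨⟨{0, 1}, rfl⟩⟩

instance : DecidableRel petersen.Adj := fun a b ↦ inferInstanceAs (Decidable (Disjoint a.1 b.1))

theorem card_petersenVertex : Fintype.card PetersenVertex = 10 := rfl

theorem petersen_exists_common_adj : ∀ a b : PetersenVertex, a ≠ b → ¬petersen.Adj a b →
    ∃ c, petersen.Adj a c ∧ petersen.Adj c b := by
  decide

theorem petersen_exists_walk_length_le_two (a b : PetersenVertex) :
    ∃ w : petersen.Walk a b, w.length ≤ 2 := by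
  by_cases hab : a = b
  · subst hab; exact ⟨.nil, by simp⟩
  by_cases hadj : petersen.Adj a b
  · exact ⟨.cons hadj .nil, by simp⟩
  obtain ⟨c, hac, hcb⟩ := petersen_exists_common_adj a b hab hadj
  exact ⟨.cons hac (.cons hcb .nil), by simp⟩

theorem petersen_preconnected : petersen.Preconnected := fun a b ↦
  ⟨(petersen_exists_walk_length_le_two a b).choose⟩

theorem petersen_dist_le_two (a b : PetersenVertex) : petersen.dist a b ≤ 2 :=
  let ⟨w, hw⟩ := petersen_exists_walk_length_le_two a b
  (dist_le w).trans hw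

theorem petersen_dist_eq_two : petersen.dist ⟨{0, 1}, rfl⟩ ⟨{0, 2}, rfl⟩ = 2 := by
  have hne : petersen.dist ⟨{0, 1}, rfl⟩ ⟨{0, 2}, rfl⟩ ≠ 0 :=
    fun h ↦ absurd ((petersen_preconnected _ _).dist_eq_zero_iff.1 h) (by decide)
  have hnadj : petersen.dist ⟨{0, 1}, rfl⟩ ⟨{0, 2}, rfl⟩ ≠ 1 :=
    fun h ↦ absurd (dist_eq_one_iff_adj.1 h) (by decide)
  have := petersen_dist_le_two ⟨{0, 1}, rfl⟩ ⟨{0, 2}, rfl⟩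
  omega

section PathBoxPetersen

variable {n : ℕ}

theorem connected_pathGraph_boxProd_petersen (hn : 0 < n) :
    (pathGraph n □ petersen).Connected :=
  have : Nonempty (Fin n) := ⟨⟨0, hn⟩⟩
  Connected.boxProd ⟨pathGraph_preconnected n⟩ ⟨petersen_preconnected⟩

theorem dist_pathGraph_boxProd_petersen (x y : Fin n × PetersenVertex) :
    ((pathGraph n □ petersen).dist x y : ℤ) = |(x.1 : ℤ) - y.1| + petersen.dist x.2 y.2 := by
  rw [dist_boxProd (pathGraph_preconnected n) petersen_preconnected, Nat.cast_add, pathGraph_dist]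

theorem diam_pathGraph_boxProd_petersen (hn : 0 < n) :
    (pathGraph n □ petersen).diam = n + 1 := by
  have : Nonempty (Fin n) := ⟨⟨0, hn⟩⟩
  apply le_antisymm
  · obtain ⟨u, v, huv⟩ := (pathGraph n □ petersen).exists_dist_eq_diam
    have hdist := dist_pathGraph_boxProd_petersen u v
    have := petersen_dist_le_two u.2 v.2
    have : |(u.1 : ℤ) - v.1| ≤ n - 1 := abs_le.2 (by omega)
    omega
  · let u : Fin n × PetersenVertex := (⟨0, hn⟩, ⟨{0, 1}, rfl⟩)
    let v : Fin n × PetersenVertex := (⟨n - 1, by omega⟩, ⟨{0, 2}, rfl⟩)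
    have huv : ((pathGraph n □ petersen).dist u v : ℤ) = n + 1 := by
      rw [dist_pathGraph_boxProd_petersen, petersen_dist_eq_two,
        abs_of_nonpos (by simp [u, v])]
      simp only [CharP.cast_eq_zero, Nat.cast_pred hn, zero_sub, neg_sub, Nat.cast_ofNat, u, v]
      ring
    have := dist_le_diam (connected_iff_ediam_ne_top.1 (connected_pathGraph_boxProd_petersen hn))
      (u := u) (v := v)
    omega

end PathBoxPetersen

/-- `|offset m v|` is the paper's level `d(v, L₀)`: with `0`-based indices the central vertex
`u_{(n+1)/2}` of `P_{2m+1}` is `m`. -/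
def offset {n : ℕ} (m : ℕ) (v : Fin n × PetersenVertex) : ℤ := (v.1 : ℤ) - m

section Offset

variable {n m : ℕ}

theorem abs_offset_le (v : Fin (2 * m + 1) × PetersenVertex) : |offset m v| ≤ m := by
  have := v.1.isLt
  exact abs_le.2 ⟨by unfold offset; omega, by unfold offset; omega⟩

theorem dist_le_abs_offset_sub_add_two (m : ℕ) (u v : Fin n × PetersenVertex) :
    ((pathGraph n □ petersen).dist u v : ℤ) ≤ |offset m u - offset m v| + 2 := by
  rw [dist_pathGraph_boxProd_petersen, offset, offset, sub_sub_sub_cancel_right]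
  have := petersen_dist_le_two u.2 v.2
  omega

theorem dist_le_abs_offset_add_abs_offset_add_two (m : ℕ) (u v : Fin n × PetersenVertex) :
    ((pathGraph n □ petersen).dist u v : ℤ) ≤ |offset m u| + |offset m v| + 2 :=
  (dist_le_abs_offset_sub_add_two m u v).trans (by linarith [abs_sub (offset m u) (offset m v)])

theorem offset_mul_offset_nonpos {u v : Fin n × PetersenVertex}
    (h : ((pathGraph n □ petersen).dist u v : ℤ) = |offset m u| + |offset m v| + 2) :
    offset m u * offset m v ≤ 0 := by
  have := dist_le_abs_offset_sub_add_two m u v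
  exact mul_nonpos_of_abs_sub_eq (le_antisymm (abs_sub _ _) (by omega))

theorem sum_abs_offset :
    ∑ v : Fin (2 * m + 1) × PetersenVertex, |offset m v| = 10 * (m * (m + 1)) := by
  rw [Fintype.sum_prod_type, ← sum_range_abs_sub,
    ← Fin.sum_univ_eq_sum_range (fun k ↦ |(k : ℤ) - m|), mul_sum]
  simp only [offset, sum_const, card_univ, card_petersenVertex, nsmul_eq_mul, Nat.cast_ofNat]

theorem card_filter_offset (p : ℤ → Prop) [DecidablePred p] :
    #{v : Fin n × PetersenVertex | p (offset m v)} = 10 * #{i : Fin n | p (i - m)} := by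
  have : ({v | p (offset m v)} : Finset (Fin n × PetersenVertex)) =
      ({i | p (i - m)} : Finset (Fin n)) ×ˢ univ := by
    ext v; simp only [mem_filter, mem_product, mem_univ, true_and, and_true]; rfl
  rw [this, card_product, card_univ, card_petersenVertex, mul_comm]

theorem card_abs_offset_eq (hm : 0 < m) :
    #{v : Fin (2 * m + 1) × PetersenVertex | |offset m v| = m} = 20 := by
  rw [card_filter_offset (fun z ↦ |z| = m)]
  have : ({i : Fin (2 * m + 1) | |(i : ℤ) - m| = m} : Finset _) = {0, Fin.last (2 * m)} := by
    ext i
    simp only [mem_filter, mem_univ, true_and, mem_insert, mem_singleton, Fin.ext_iff,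
      Fin.val_zero, Fin.val_last]
    have := i.isLt
    rw [abs_eq (by omega)]
    omega
  rw [this, card_pair (Fin.ext_iff.not.2 (by rw [Fin.val_zero, Fin.val_last]; omega))]

theorem card_offset_eq_zero : #{v : Fin (2 * m + 1) × PetersenVertex | offset m v = 0} = 10 := by
  rw [card_filter_offset (· = 0),
    card_eq_one.2 ⟨⟨m, by omega⟩, by ext i; simp [Fin.ext_iff, sub_eq_zero]⟩]

end Offset

section Tight

variable {m : ℕ} {φ : Fin (2 * m + 1) × PetersenVertex → ℕ}
  {x : ℕ → Fin (2 * m + 1) × PetersenVertex} {K : ℕ}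

/-- The equality case of the level-sum bound for the enumeration `x 0, …, x K`. -/
structure IsTightEnumeration (m : ℕ) (φ : Fin (2 * m + 1) × PetersenVertex → ℕ)
    (x : ℕ → Fin (2 * m + 1) × PetersenVertex) (K : ℕ) : Prop where
  offset_first : offset m (x 0) = 0
  offset_last : offset m (x K) = 0
  offset_mul_offset_succ_nonpos : ∀ i < K, offset m (x i) * offset m (x (i + 1)) ≤ 0
  gap_eq : ∀ i < K,
    (φ (x (i + 1)) : ℤ) - φ (x i) = 2 * m + 1 - |offset m (x i)| - |offset m (x (i + 1))|

theorem IsRadioLabeling.isTightEnumeration_of_span_le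
    (hφ : IsRadioLabeling (pathGraph (2 * m + 1) □ petersen) φ) (hK : K + 1 = 10 * (2 * m + 1))
    (hx : Set.BijOn x (Set.Iio (K + 1)) Set.univ) (hmono : StrictMonoOn (φ ∘ x) (Set.Iio (K + 1)))
    (hspan : span φ ≤ 5 * (2 * m + 1) ^ 2 - (2 * m + 1) + 5) :
    IsTightEnumeration m φ x K := by
  have hdiam := diam_pathGraph_boxProd_petersen (n := 2 * m + 1) (by omega)
  have hlt (i : ℕ) (hi : i < K) : φ (x i) < φ (x (i + 1)) :=
    hmono (Set.mem_Iio.2 (by omega)) (Set.mem_Iio.2 (by omega)) (Nat.lt_succ_self i)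
  have hsub : (φ (x K) : ℤ) - φ (x 0) ≤ 5 * (2 * m + 1) ^ 2 - (2 * m + 1) + 5 := by
    have hlt0 : φ (x 0) < φ (x K) :=
      hmono (Set.mem_Iio.2 (by omega)) (Set.mem_Iio.2 (by omega)) (by omega)
    have hpow : 2 * m + 1 ≤ 5 * (2 * m + 1) ^ 2 := by nlinarith
    have h := (sub_le_span φ (x K) (x 0)).trans hspan
    zify [hlt0.le, hpow] at h
    exact h
  obtain ⟨hfirst, hlast, htight⟩ := eq_of_sub_le_of_gap_bounds (f := fun i ↦ (φ (x i) : ℤ))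
    (d := fun i ↦ ((pathGraph (2 * m + 1) □ petersen).dist (x i) (x (i + 1)) : ℤ))
    (ℓ := fun i ↦ |offset m (x i)|) (D := 2 * m + 3) (c := 2) (abs_nonneg _) (abs_nonneg _)
    (fun i hi ↦ by have := hφ.diam_add_one_le (hlt i hi); push_cast [hdiam] at this; linarith)
    (fun i _ ↦ dist_le_abs_offset_add_abs_offset_add_two m _ _)
    (by
      rw [sum_range_comp_eq_sum hx fun v ↦ |offset m v|, sum_abs_offset]
      have : (K : ℤ) = 20 * m + 9 := by omega
      rw [this]
      linarith)
  exact ⟨abs_eq_zero.1 hfirst, abs_eq_zero.1 hlast,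
    fun i hi ↦ offset_mul_offset_nonpos (htight i hi).1, fun i hi ↦ by linarith [htight i hi]⟩

theorem IsRadioLabeling.offset_eq_zero_or_offset_eq_zero
    (hφ : IsRadioLabeling (pathGraph (2 * m + 1) □ petersen) φ) (hm : 0 < m)
    {u v w : Fin (2 * m + 1) × PetersenVertex} (hv : |offset m v| = m)
    (huv : offset m u * offset m v ≤ 0) (hvw : offset m v * offset m w ≤ 0)
    (hφuv : (φ v : ℤ) - φ u = 2 * m + 1 - |offset m u| - |offset m v|)
    (hφvw : (φ w : ℤ) - φ v = 2 * m + 1 - |offset m v| - |offset m w|) :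
    offset m u = 0 ∨ offset m w = 0 := by
  have hv0 : offset m v ≠ 0 := fun h ↦ by rw [h, abs_zero] at hv; omega
  -- `u` and `w` both lie on the side of `L₀` opposite to `v`
  have huw : 0 ≤ offset m u * offset m w := by
    refine nonneg_of_mul_nonneg_left ?_ (mul_self_pos.2 hv0)
    nlinarith [mul_nonneg_of_nonpos_of_nonpos huv hvw]
  have hlt : φ u < φ w := by
    have := abs_offset_le u
    have := abs_offset_le w
    omega
  have hrad := hφ.diam_add_one_le hlt
  rw [diam_pathGraph_boxProd_petersen (by omega)] at hrad
  have := dist_le_abs_offset_sub_add_two m u w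
  exact eq_zero_or_eq_zero_of_abs_add_abs_le huw (by push_cast at hrad; linarith)

theorem IsTightEnumeration.card_add_two_le (ht : IsTightEnumeration m φ x K)
    (hφ : IsRadioLabeling (pathGraph (2 * m + 1) □ petersen) φ) (hm : 0 < m) :
    #{k ∈ range (K + 1) | |offset m (x k)| = m} + 2 ≤
      2 * #{k ∈ range (K + 1) | offset m (x k) = 0} := by
  refine card_add_two_le_two_mul_card (K := K) (by simp [ht.offset_first])
    (by simp [ht.offset_last]) fun k hk ↦ ?_
  obtain ⟨hk, hkm⟩ := mem_filter.1 hk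
  have hk0 : 0 < k :=
    Nat.pos_of_ne_zero fun h ↦ by rw [h, ht.offset_first, abs_zero] at hkm; omega
  have hkK : k < K := lt_of_le_of_ne (Nat.lt_succ_iff.1 (mem_range.1 hk)) fun h ↦ by
    rw [h, ht.offset_last, abs_zero] at hkm; omega
  have hprev := ht.offset_mul_offset_succ_nonpos (k - 1) (by omega)
  have hgap := ht.gap_eq (k - 1) (by omega)
  rw [Nat.sub_add_cancel hk0] at hprev hgap
  refine ⟨hk0, hkK, ?_⟩
  simp only [mem_filter, mem_range]
  rcases hφ.offset_eq_zero_or_offset_eq_zero hm hkm hprev (ht.offset_mul_offset_succ_nonpos k hkK)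
    hgap (ht.gap_eq k hkK) with h | h
  · exact .inl ⟨by omega, h⟩
  · exact .inr ⟨by omega, h⟩

end Tight

theorem stmt_10 (n : ℕ) (hn : 3 ≤ n) (ho : Odd n)
    (φ : Fin n × {s : Finset (Fin 5) // s.card = 2} → ℕ)
    (hφ : IsRadioLabeling (pathGraph n □ petersen) φ) :
    5 * n ^ 2 - n + 6 ≤ span φ := by
  obtain ⟨m, rfl⟩ := ho
  have hm : 0 < m := by omega
  have hcard : Fintype.card (Fin (2 * m + 1) × PetersenVertex) = 20 * m + 9 + 1 := by
    rw [Fintype.card_prod, Fintype.card_fin, card_petersenVertex]; ring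
  obtain ⟨x, hx, hmono⟩ :=
    exists_bijOn_strictMonoOn_comp (hφ.injective (connected_pathGraph_boxProd_petersen (by omega)))
  rw [hcard] at hx hmono
  by_contra! hspan
  have hcount :=
    (hφ.isTightEnumeration_of_span_le (by omega) hx hmono (by omega)).card_add_two_le hφ hm
  rw [card_filter_range_comp hx (fun v ↦ |offset m v| = m),
    card_filter_range_comp hx (fun v ↦ offset m v = 0), card_abs_offset_eq hm,
    card_offset_eq_zero] at hcount
  omega
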